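/- If a difference operator D = Σ_{j=0}^r a_j τ^j ∈ K[τ] of order r satisfies dim_C(ker D) = r (kernel taken inside K = C(x)), then D is completely factorable over K: there exist f₁,…,f_r ∈ K with D = a_r(τ − f₁)⋯(τ − f_r). -/

import Mathlib

open Polynomial RatFunc

noncomputable def shiftHom (h : ℂ) : RatFunc ℂ →ₐ[ℂ] RatFunc ℂ :=
  RatFunc.liftAlgHom (Polynomial.aeval (RatFunc.X - RatFunc.C h)) <|
    nonZeroDivisors_le_comap_nonZeroDivisors_of_injective _ <| by
      have key : ∀ p : ℂ[X], (Polynomial.aeval (RatFunc.X - RatFunc.C h)) p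
          = algebraMap ℂ[X] (RatFunc ℂ) (p.comp (Polynomial.X - Polynomial.C h)) := by
        intro p
        have := Polynomial.aeval_algHom_apply (IsScalarTower.toAlgHom ℂ ℂ[X] (RatFunc ℂ))
          (Polynomial.X - Polynomial.C h) p
        simpa [Polynomial.comp_eq_aeval, map_sub] using this
      intro p q hpq
      have h2 : p.comp (Polynomial.X - Polynomial.C h) = q.comp (Polynomial.X - Polynomial.C h) :=
        RatFunc.algebraMap_injective ℂ (by rw [← key, ← key, hpq])
      have h3 := congrArg (fun r : ℂ[X] => r.comp (Polynomial.X + Polynomial.C h)) h2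
      simpa [Polynomial.comp_assoc, Polynomial.sub_comp, Polynomial.X_comp,
        Polynomial.C_comp] using h3

/-- multiplication operator -/
noncomputable def mulOp (f : RatFunc ℂ) : Module.End ℂ (RatFunc ℂ) := LinearMap.mulLeft ℂ f

/-- shift operator τ -/
noncomputable def tauOp (h : ℂ) : Module.End ℂ (RatFunc ℂ) := (shiftHom h).toLinearMap

/-!
If `u` solves `D u = 0` and `u ≠ 0`, then `f = τu / u` makes `τ - f` kill `u`. Right division of
`D` by `τ - f` leaves a remainder of order zero, i.e. multiplication by a function, which must
vanish because it kills `u`; so `D = Q (τ - f)` with `Q` of order `r - 1` and the same leading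
coefficient. The kernel of `τ - f` is the line `ℂ u`, since the ratio of two of its solutions is
a shift-invariant rational function, hence a constant. Therefore `τ - f` maps the remaining
`r - 1` independent solutions of `D` to independent solutions of `Q`, and induction on `r`
produces the factorization.
-/

theorem Polynomial.eq_C_of_taylor_eq_self {R : Type*} [CommRing R] [IsDomain R] [CharZero R]
    {h : R} (hh : h ≠ 0) {p : R[X]} (hp : taylor h p = p) : p = Polynomial.C (p.eval 0) := by
  have hperiodic : ∀ n : ℕ, p.eval (n * h) = p.eval 0 := by
    intro n
    induction n with
    | zero => simp
    | succ n ih => rw [Nat.cast_succ, add_one_mul, ← taylor_eval, hp, ih]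
  apply eq_of_infinite_eval_eq
  refine Set.infinite_of_injective_forall_mem (f := fun n : ℕ => n * h) ?_ (by simpa using hperiodic)
  exact (mul_left_injective₀ hh).comp Nat.cast_injective

theorem shiftHom_algebraMap (h : ℂ) (p : ℂ[X]) :
    shiftHom h (algebraMap ℂ[X] (RatFunc ℂ) p) = algebraMap ℂ[X] (RatFunc ℂ) (taylor (-h) p) := by
  rw [shiftHom, RatFunc.liftAlgHom_apply, RatFunc.num_algebraMap, RatFunc.denom_algebraMap,
    map_one, div_one, taylor_apply, comp_eq_aeval, ← aeval_algebraMap_apply, map_add, map_neg,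
    map_neg, RatFunc.algebraMap_X, RatFunc.algebraMap_C, sub_eq_add_neg]

theorem exists_eq_algebraMap_of_shiftHom_eq_self {h : ℂ} (hh : h ≠ 0) {g : RatFunc ℂ}
    (hg : shiftHom h g = g) : ∃ c : ℂ, g = algebraMap ℂ (RatFunc ℂ) c := by
  have hshift : shiftHom h g = algebraMap ℂ[X] (RatFunc ℂ) (taylor (-h) g.num) /
      algebraMap ℂ[X] (RatFunc ℂ) (taylor (-h) g.denom) := by
    rw [← shiftHom_algebraMap, ← shiftHom_algebraMap, ← map_div₀, RatFunc.num_div_denom]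
  have hdvd : g.denom ∣ taylor (-h) g.denom := by
    conv_lhs => rw [← hg, hshift]
    exact RatFunc.denom_div_dvd _ _
  have hdenom : g.denom = 1 := by
    have hfix : taylor (-h) g.denom = g.denom :=
      (eq_of_dvd_of_natDegree_le_of_leadingCoeff hdvd (natDegree_taylor _ _).le
        (by rw [leadingCoeff_taylor])).symm
    have hmonic := g.monic_denom
    rw [eq_C_of_taylor_eq_self (neg_ne_zero.mpr hh) hfix] at hmonic ⊢
    rw [Monic.def, leadingCoeff_C] at hmonic
    rw [hmonic, map_one]
  have hg' : g = algebraMap ℂ[X] (RatFunc ℂ) g.num := by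
    simpa [hdenom] using g.num_div_denom.symm
  have hnum : taylor (-h) g.num = g.num := by
    apply RatFunc.algebraMap_injective ℂ
    rw [← shiftHom_algebraMap, ← hg', hg]
  obtain ⟨c, hc⟩ : ∃ c, g.num = Polynomial.C c :=
    ⟨_, eq_C_of_taylor_eq_self (neg_ne_zero.mpr hh) hnum⟩
  exact ⟨c, by rw [hg', hc, RatFunc.algebraMap_C, RatFunc.algebraMap_eq_C]⟩

theorem LinearMap.mulLeft_add {R A : Type*} [CommSemiring R] [NonUnitalNonAssocSemiring A]
    [Module R A] [SMulCommClass R A A] [IsScalarTower R A A] (a b : A) :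
    mulLeft R (a + b) = mulLeft R a + mulLeft R b :=
  map_add (LinearMap.mul R A) a b

theorem LinearIndependent.map_init {C V W : Type*} [DivisionRing C] [AddCommGroup V] [Module C V]
    [AddCommGroup W] [Module C W] {n : ℕ} {u : Fin (n + 1) → V} (hu : LinearIndependent C u)
    (T : V →ₗ[C] W) (hT : LinearMap.ker T ≤ C ∙ u (Fin.last n)) :
    LinearIndependent C (T ∘ Fin.init u) := by
  obtain ⟨hinit, hlast⟩ := linearIndependent_finSnoc.mp ((Fin.snoc_init_self u).symm ▸ hu)
  refine hinit.map (Submodule.disjoint_def.mpr fun x hx hxT => ?_)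
  obtain ⟨c, rfl⟩ := Submodule.mem_span_singleton.mp (hT hxT)
  by_cases hc : c = 0
  · rw [hc, zero_smul]
  · exact absurd ((Submodule.smul_mem_iff _ hc).mp hx) hlast

section DifferenceOperator

open LinearMap (mulLeft)

variable {C K : Type*} [CommRing C] [CommRing K] [Algebra C K] (σ : K →ₐ[C] K)

def diffOp (b : ℕ → K) (n : ℕ) : Module.End C K :=
  ∑ j ∈ Finset.range (n + 1), mulLeft C (b j) * σ.toLinearMap ^ j

theorem diffOp_zero (b : ℕ → K) : diffOp σ b 0 = mulLeft C (b 0) := by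
  simp [diffOp]

theorem diffOp_succ (b : ℕ → K) (n : ℕ) :
    diffOp σ b (n + 1) = diffOp σ b n + mulLeft C (b (n + 1)) * σ.toLinearMap ^ (n + 1) :=
  Finset.sum_range_succ _ _

theorem diffOp_congr {b c : ℕ → K} {n : ℕ} (hbc : ∀ j ≤ n, b j = c j) :
    diffOp σ b n = diffOp σ c n :=
  Finset.sum_congr rfl fun j hj => by rw [hbc j (Nat.lt_succ_iff.mp (Finset.mem_range.mp hj))]

theorem mulLeft_mul_toLinearMap_pow_succ (b f : K) (n : ℕ) :
    mulLeft C b * σ.toLinearMap ^ (n + 1) =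
      mulLeft C b * σ.toLinearMap ^ n * (σ.toLinearMap - mulLeft C f) +
        mulLeft C (b * (σ.toLinearMap ^ n) f) * σ.toLinearMap ^ n := by
  ext v
  simp only [pow_succ, Module.End.mul_apply, Module.End.pow_apply, AlgHom.coe_toLinearMap,
    LinearMap.mulLeft_apply, LinearMap.add_apply, LinearMap.sub_apply, iterate_map_sub,
    iterate_map_mul]
  ring

theorem exists_diffOp_succ_eq_mul_sub_add (f : K) (n : ℕ) (b : ℕ → K) :
    ∃ (c : ℕ → K) (rem : K), c n = b (n + 1) ∧
      diffOp σ b (n + 1) = diffOp σ c n * (σ.toLinearMap - mulLeft C f) + mulLeft C rem := by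
  induction n generalizing b with
  | zero =>
    refine ⟨fun _ => b 1, b 0 + b 1 * f, rfl, ?_⟩
    rw [diffOp_succ, diffOp_zero, diffOp_zero, zero_add, mulLeft_mul_toLinearMap_pow_succ σ _ f 0]
    simp only [pow_zero, mul_one, LinearMap.mulLeft_add, Module.End.one_apply]
    abel
  | succ n ih =>
    -- `b (n+2) τ^(n+2) ≡ x τ^(n+1)` modulo right multiples of `τ - f`: fold `x` into coefficient
    -- `n + 1` and divide the resulting operator of order `n + 1`.
    set T := σ.toLinearMap - mulLeft C f
    set x := b (n + 2) * (σ.toLinearMap ^ (n + 1)) f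
    obtain ⟨c, rem, -, hb⟩ := ih (Function.update b (n + 1) (b (n + 1) + x))
    refine ⟨Function.update c (n + 1) (b (n + 2)), rem, Function.update_self .., ?_⟩
    have hb_lower : diffOp σ (Function.update b (n + 1) (b (n + 1) + x)) n = diffOp σ b n :=
      diffOp_congr σ fun j hj => Function.update_of_ne (by omega) _ _
    have hc_lower : diffOp σ (Function.update c (n + 1) (b (n + 2))) n = diffOp σ c n :=
      diffOp_congr σ fun j hj => Function.update_of_ne (by omega) _ _
    rw [diffOp_succ, hb_lower, Function.update_self, LinearMap.mulLeft_add, add_mul, ← add_assoc,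
      ← diffOp_succ] at hb
    calc diffOp σ b (n + 2)
        = (diffOp σ b (n + 1) + mulLeft C x * σ.toLinearMap ^ (n + 1)) +
            mulLeft C (b (n + 2)) * σ.toLinearMap ^ (n + 1) * T := by
          rw [diffOp_succ σ b (n + 1), mulLeft_mul_toLinearMap_pow_succ σ _ f (n + 1)]
          abel
      _ = _ := by
          rw [hb, diffOp_succ σ _ n, hc_lower, Function.update_self, add_mul]
          abel

end DifferenceOperator

section Factorization

open LinearMap (mulLeft)

variable {C K : Type*} [Field C] [Field K] [Algebra C K] (σ : K →ₐ[C] K)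

theorem ker_sub_mulLeft_le_span (hfix : ∀ g, σ g = g → ∃ c, g = algebraMap C K c) {u f : K}
    (hu : u ≠ 0) (huf : σ u = f * u) :
    LinearMap.ker (σ.toLinearMap - mulLeft C f) ≤ C ∙ u := by
  intro w hw
  have hσw : σ w = f * w := sub_eq_zero.mp hw
  have hf : f ≠ 0 := by
    rintro rfl
    exact hu (σ.toRingHom.injective (by simpa using huf))
  obtain ⟨c, hc⟩ := hfix (w / u) (by rw [map_div₀, huf, hσw, mul_div_mul_left _ _ hf])
  refine Submodule.mem_span_singleton.mpr ⟨c, ?_⟩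
  rw [Algebra.smul_def, ← hc, div_mul_cancel₀ _ hu]

theorem exists_diffOp_succ_eq_mul_sub {u f : K} (hu : u ≠ 0) (huf : σ u = f * u) (n : ℕ)
    (b : ℕ → K) (hbu : diffOp σ b (n + 1) u = 0) :
    ∃ c : ℕ → K, c n = b (n + 1) ∧
      diffOp σ b (n + 1) = diffOp σ c n * (σ.toLinearMap - mulLeft C f) := by
  obtain ⟨c, rem, hcn, hb⟩ := exists_diffOp_succ_eq_mul_sub_add σ f n b
  have hTu : (σ.toLinearMap - mulLeft C f) u = 0 := sub_eq_zero.mpr huf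
  have hrem : rem = 0 := by
    rw [hb] at hbu
    simpa [hTu, hu] using hbu
  exact ⟨c, hcn, by rw [hb, hrem, LinearMap.mulLeft_zero_eq_zero, add_zero]⟩

theorem exists_diffOp_eq_mulLeft_mul_prod (hfix : ∀ g, σ g = g → ∃ c, g = algebraMap C K c)
    (n : ℕ) (b : ℕ → K) (u : Fin n → K) (hu : LinearIndependent C u)
    (hker : ∀ i, diffOp σ b n (u i) = 0) :
    ∃ f : Fin n → K,
      diffOp σ b n = mulLeft C (b n) * (List.ofFn fun i => σ.toLinearMap - mulLeft C (f i)).prod := by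
  induction n generalizing b with
  | zero => exact ⟨Fin.elim0, by simp [diffOp_zero]⟩
  | succ n ih =>
    set u₀ := u (Fin.last n)
    have hu₀ : u₀ ≠ 0 := hu.ne_zero _
    set f₀ := σ u₀ / u₀
    have hσu₀ : σ u₀ = f₀ * u₀ := (div_mul_cancel₀ _ hu₀).symm
    obtain ⟨c, hcn, hbc⟩ := exists_diffOp_succ_eq_mul_sub σ hu₀ hσu₀ n b (hker _)
    set T := σ.toLinearMap - mulLeft C f₀
    have hv : LinearIndependent C (T ∘ Fin.init u) :=
      hu.map_init T (ker_sub_mulLeft_le_span σ hfix hu₀ hσu₀)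
    obtain ⟨f, hf⟩ := ih c _ hv fun i => by
      rw [hbc] at hker
      exact hker i.castSucc
    refine ⟨Fin.snoc f f₀, ?_⟩
    rw [hbc, hf, hcn, List.ofFn_succ', List.prod_concat]
    simp only [Fin.snoc_castSucc, Fin.snoc_last, mul_assoc, T]

end Factorization

theorem complete_factorability_of_full_kernel_general (h : ℂ) (hh : h ≠ 0)
    (r : ℕ) (a : ℕ → RatFunc ℂ)
    (D : Module.End ℂ (RatFunc ℂ))
    (hD : D = ∑ j ∈ Finset.range (r + 1), mulOp (a j) * (tauOp h) ^ j)
    (hker : Module.finrank ℂ (LinearMap.ker D) = r) :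
    ∃ f : Fin r → RatFunc ℂ,
      D = mulOp (a r) * (List.ofFn (fun i => tauOp h - mulOp (f i))).prod := by
  have hD' : D = diffOp (shiftHom h) a r := hD
  obtain ⟨u, hu⟩ := exists_linearIndependent_of_le_finrank hker.ge
  obtain ⟨f, hf⟩ := exists_diffOp_eq_mulLeft_mul_prod (shiftHom h)
    (fun _ => exists_eq_algebraMap_of_shiftHom_eq_self hh) r a (Subtype.val ∘ u)
    (hu.map' _ (Submodule.ker_subtype _)) fun i => hD' ▸ (u i).2
  exact ⟨f, hD'.trans hf⟩

/-- if a difference operator D = Σ_{j=0}^r a_j τ^j of order r has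
dim_ℂ(ker D) = r, then D is completely factorable over K:
D = a_r·(τ − f₁)⋯(τ − f_r) for some f₁,…,f_r ∈ K. -/
theorem complete_factorability_of_full_kernel (h : ℂ) (hh : h ≠ 0)
    (r : ℕ) (a : ℕ → RatFunc ℂ) (har : a r ≠ 0)
    (D : Module.End ℂ (RatFunc ℂ))
    (hD : D = ∑ j ∈ Finset.range (r + 1), mulOp (a j) * (tauOp h) ^ j)
    (hfd : FiniteDimensional ℂ (LinearMap.ker D))
    (hker : Module.finrank ℂ (LinearMap.ker D) = r) :
    ∃ f : Fin r → RatFunc ℂ,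
      D = mulOp (a r) * (List.ofFn (fun i => tauOp h - mulOp (f i))).prod :=
  complete_factorability_of_full_kernel_general h hh r a D hD hker
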